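/- Under the same stable partition pair hypothesis relating two LPs (including c_j = ĉ_j constant on each column block J_q), for any feasible x of the first LP and its block-average x̂: c^T x = ĉ^T x̂. Consequently the two WL-indistinguishable LPs have the same optimal objective value (allowing the values +∞ for infeasible and −∞ for unbounded). -/

import Mathlib

/-- Constraint relation `∘ᵢ ∈ {≤, =, ≥}`. -/
def cRel : Ordering → ℝ → ℝ → Prop
  | Ordering.lt => fun a b => a ≤ b
  | Ordering.eq => fun a b => a = b
  | Ordering.gt => fun a b => a ≥ b

/-- Feasibility of `x` for the LP with data `(A, b, l, u, ∘)`: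
`Ax ∘ b` componentwise and `l ≤ x ≤ u`. -/
def Feas {m n : ℕ} (A : Fin m → Fin n → ℝ) (b : Fin m → ℝ) (l u : Fin n → ℝ)
    (o : Fin m → Ordering) (x : Fin n → ℝ) : Prop :=
  (∀ i, cRel (o i) (∑ j, A i j * x j) (b i)) ∧ ∀ j, l j ≤ x j ∧ x j ≤ u j

/-- Block average of `x` over the column partition given by the fibers of `κ`. -/
noncomputable def blockAvg {n t : ℕ} (κ : Fin n → Fin t) (x : Fin n → ℝ) : Fin n → ℝ :=
  fun j => (∑ j' ∈ Finset.univ.filter (fun j' => κ j' = κ j), x j') /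
    (Finset.univ.filter (fun j' => κ j' = κ j)).card

/-!
Averaging a vector over the column blocks is a self-adjoint operation that fixes the
block-constant vectors, and `∑ⱼ aⱼ x̂ⱼ` depends on `a` only through its block sums. Hence the
objective `cᵀx` is unchanged by averaging, and for a row `i` in the block `I_p` the equal row
block sums, the equal column block sums and the equal block sums of `A` and `Â` give
`(Â x̂)ᵢ = (1/|I_p|) ∑_{i' ∈ I_p} (A x)_{i'}`. Constraints `≤, =, ≥` with a common right-hand
side on `I_p` and bounds common on each `J_q` survive averaging, so `x ↦ x̂` maps each feasible
region into the other one without changing the objective, and the two LPs attain the same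
sets of objective values.
-/

open Finset
open scoped BigOperators

lemma cRel_expect {ι : Type*} {s : Finset ι} (hs : s.Nonempty) {f : ι → ℝ} {β : ℝ}
    {ord : Ordering} (h : ∀ i ∈ s, cRel ord (f i) β) : cRel ord (𝔼 i ∈ s, f i) β := by
  cases ord with
  | lt => exact expect_le hs h
  | eq => exact (expect_congr rfl h).trans (expect_const hs β)
  | gt => exact le_expect hs h

section BlockAverage

variable {n t : ℕ} (κ : Fin n → Fin t)

lemma blockAvg_eq_expect (x : Fin n → ℝ) (j : Fin n) :
    blockAvg κ x j = 𝔼 j' ∈ univ.filter (fun j' => κ j' = κ j), x j' :=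
  (expect_eq_sum_div_card _ _).symm

lemma sum_mul_blockAvg (a x : Fin n → ℝ) :
    ∑ j, a j * blockAvg κ x j =
      ∑ q, (∑ j ∈ univ.filter (fun j => κ j = q), a j) *
        ((∑ j ∈ univ.filter (fun j => κ j = q), x j) /
          (univ.filter (fun j => κ j = q)).card) := by
  rw [← sum_fiberwise univ κ]
  refine sum_congr rfl fun q _ => ?_
  rw [sum_mul]
  refine sum_congr rfl fun j hj => ?_
  simp only [blockAvg, (mem_filter.1 hj).2]

lemma sum_mul_blockAvg_comm (a x : Fin n → ℝ) :
    ∑ j, a j * blockAvg κ x j = ∑ j, blockAvg κ a j * x j := by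
  simp only [sum_mul_blockAvg, mul_comm _ (x _)]
  exact sum_congr rfl fun q _ => by ring

lemma sum_mul_blockAvg_congr {a a' : Fin n → ℝ}
    (h : ∀ q, ∑ j ∈ univ.filter (fun j => κ j = q), a j =
      ∑ j ∈ univ.filter (fun j => κ j = q), a' j) (x : Fin n → ℝ) :
    ∑ j, a j * blockAvg κ x j = ∑ j, a' j * blockAvg κ x j := by
  simp only [sum_mul_blockAvg, h]

lemma blockAvg_eq_self {w : Fin n → ℝ} (hw : ∀ j j', κ j = κ j' → w j = w j') :
    blockAvg κ w = w := by
  funext j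
  rw [blockAvg_eq_expect, expect_congr rfl fun j' hj' => hw j' j (mem_filter.1 hj').2]
  exact expect_const ⟨j, by simp⟩ _

lemma sum_mul_blockAvg_of_blockConst {w : Fin n → ℝ} (hw : ∀ j j', κ j = κ j' → w j = w j')
    (x : Fin n → ℝ) : ∑ j, w j * blockAvg κ x j = ∑ j, w j * x j := by
  rw [sum_mul_blockAvg_comm, blockAvg_eq_self κ hw]

end BlockAverage

section StablePartition

variable {m n s t : ℕ} {A Ahat : Fin m → Fin n → ℝ} {ρ : Fin m → Fin s} {κ : Fin n → Fin t}

lemma sum_mul_blockAvg_eq_expect_rows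
    (hrow : ∀ i i', ρ i = ρ i' → ∀ q,
      ∑ j ∈ univ.filter (fun j => κ j = q), A i j =
      ∑ j ∈ univ.filter (fun j => κ j = q), A i' j)
    (hrowhat : ∀ i q,
      ∑ j ∈ univ.filter (fun j => κ j = q), A i j =
      ∑ j ∈ univ.filter (fun j => κ j = q), Ahat i j)
    (hcol : ∀ j j', κ j = κ j' → ∀ p,
      ∑ i ∈ univ.filter (fun i => ρ i = p), A i j =
      ∑ i ∈ univ.filter (fun i => ρ i = p), A i j')
    (x : Fin n → ℝ) (i : Fin m) :
    ∑ j, Ahat i j * blockAvg κ x j =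
      𝔼 i' ∈ univ.filter (fun i' => ρ i' = ρ i), ∑ j, A i' j * x j := by
  set P := univ.filter (fun i' => ρ i' = ρ i)
  have hsum : ∑ i' ∈ P, ∑ j, A i' j * blockAvg κ x j = ∑ i' ∈ P, ∑ j, A i' j * x j := by
    rw [sum_comm, sum_comm (s := P)]
    simp only [← sum_mul]
    exact sum_mul_blockAvg_of_blockConst κ (fun j j' h => hcol j j' h (ρ i)) x
  calc ∑ j, Ahat i j * blockAvg κ x j
      = ∑ j, A i j * blockAvg κ x j := (sum_mul_blockAvg_congr κ (hrowhat i) x).symm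
    _ = 𝔼 i' ∈ P, ∑ j, A i' j * blockAvg κ x j := by
      rw [expect_congr rfl fun i' hi' =>
        sum_mul_blockAvg_congr κ (hrow i' i (mem_filter.1 hi').2) x]
      exact (expect_const ⟨i, by simp⟩ _).symm
    _ = 𝔼 i' ∈ P, ∑ j, A i' j * x j := by
      rw [expect_eq_sum_div_card, expect_eq_sum_div_card, hsum]

variable {b : Fin m → ℝ} {l u : Fin n → ℝ} {o : Fin m → Ordering}

theorem Feas.blockAvg
    (hVconst : ∀ i i', ρ i = ρ i' → b i = b i' ∧ o i = o i')
    (hWconst : ∀ j j', κ j = κ j' → l j = l j' ∧ u j = u j')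
    (hrow : ∀ i i', ρ i = ρ i' → ∀ q,
      ∑ j ∈ univ.filter (fun j => κ j = q), A i j =
      ∑ j ∈ univ.filter (fun j => κ j = q), A i' j)
    (hrowhat : ∀ i q,
      ∑ j ∈ univ.filter (fun j => κ j = q), A i j =
      ∑ j ∈ univ.filter (fun j => κ j = q), Ahat i j)
    (hcol : ∀ j j', κ j = κ j' → ∀ p,
      ∑ i ∈ univ.filter (fun i => ρ i = p), A i j =
      ∑ i ∈ univ.filter (fun i => ρ i = p), A i j')
    {x : Fin n → ℝ} (hx : Feas A b l u o x) : Feas Ahat b l u o (blockAvg κ x) := by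
  refine ⟨fun i => ?_, fun j => ?_⟩
  · rw [sum_mul_blockAvg_eq_expect_rows hrow hrowhat hcol]
    refine cRel_expect ⟨i, by simp⟩ fun i' hi' => ?_
    obtain ⟨hb, ho⟩ := hVconst i' i (mem_filter.1 hi').2
    exact hb ▸ ho ▸ hx.1 i'
  · have hne : (univ.filter (fun j' => κ j' = κ j)).Nonempty := ⟨j, by simp⟩
    rw [blockAvg_eq_expect]
    exact ⟨le_expect hne fun j' hj' => (hWconst j' j (mem_filter.1 hj').2).1 ▸ (hx.2 j').1,
      expect_le hne fun j' hj' => (hWconst j' j (mem_filter.1 hj').2).2 ▸ (hx.2 j').2⟩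

end StablePartition

theorem stmt5_general {m n s t : ℕ}
    (A Ahat : Fin m → Fin n → ℝ) (b bhat : Fin m → ℝ)
    (c chat l lhat u uhat : Fin n → ℝ) (o ohat : Fin m → Ordering)
    (ρ : Fin m → Fin s) (κ : Fin n → Fin t)
    (hb : ∀ i, b i = bhat i) (ho : ∀ i, o i = ohat i)
    (hVconst : ∀ i i', ρ i = ρ i' → b i = b i' ∧ o i = o i')
    (hc : ∀ j, c j = chat j) (hl : ∀ j, l j = lhat j) (hu : ∀ j, u j = uhat j)
    (hWconst : ∀ j j', κ j = κ j' → c j = c j' ∧ l j = l j' ∧ u j = u j')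
    (hrow : ∀ i i', ρ i = ρ i' → ∀ q,
      ∑ j ∈ Finset.univ.filter (fun j => κ j = q), A i j =
      ∑ j ∈ Finset.univ.filter (fun j => κ j = q), A i' j)
    (hrowhat : ∀ i q,
      ∑ j ∈ Finset.univ.filter (fun j => κ j = q), A i j =
      ∑ j ∈ Finset.univ.filter (fun j => κ j = q), Ahat i j)
    (hcol : ∀ j j', κ j = κ j' → ∀ p,
      ∑ i ∈ Finset.univ.filter (fun i => ρ i = p), A i j =
      ∑ i ∈ Finset.univ.filter (fun i => ρ i = p), A i j')
    (hcolhat : ∀ j p,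
      ∑ i ∈ Finset.univ.filter (fun i => ρ i = p), A i j =
      ∑ i ∈ Finset.univ.filter (fun i => ρ i = p), Ahat i j) :
    (∀ x : Fin n → ℝ, Feas A b l u o x →
      ∑ j, c j * x j = ∑ j, chat j * blockAvg κ x j) ∧
    sInf ((fun x : Fin n → ℝ => ((∑ j, c j * x j : ℝ) : EReal)) ''
        {x | Feas A b l u o x}) =
      sInf ((fun x : Fin n → ℝ => ((∑ j, chat j * x j : ℝ) : EReal)) ''
        {x | Feas Ahat bhat lhat uhat ohat x}) := by
  obtain rfl : b = bhat := funext hb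
  obtain rfl : o = ohat := funext ho
  obtain rfl : c = chat := funext hc
  obtain rfl : l = lhat := funext hl
  obtain rfl : u = uhat := funext hu
  have hlu : ∀ j j', κ j = κ j' → l j = l j' ∧ u j = u j' := fun j j' h => (hWconst j j' h).2
  have hobj (x : Fin n → ℝ) : ∑ j, c j * blockAvg κ x j = ∑ j, c j * x j :=
    sum_mul_blockAvg_of_blockConst κ (fun j j' h => (hWconst j j' h).1) x
  have hrowAhat : ∀ i i', ρ i = ρ i' → ∀ q, ∑ j ∈ univ.filter (fun j => κ j = q), Ahat i j =
      ∑ j ∈ univ.filter (fun j => κ j = q), Ahat i' j := fun i i' h q => by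
    rw [← hrowhat, ← hrowhat, hrow i i' h]
  have hcolAhat : ∀ j j', κ j = κ j' → ∀ p, ∑ i ∈ univ.filter (fun i => ρ i = p), Ahat i j =
      ∑ i ∈ univ.filter (fun i => ρ i = p), Ahat i j' := fun j j' h p => by
    rw [← hcolhat, ← hcolhat, hcol j j' h]
  refine ⟨fun x _ => (hobj x).symm, congrArg sInf (Set.Subset.antisymm ?_ ?_)⟩
  · rintro _ ⟨x, hx, rfl⟩
    exact ⟨blockAvg κ x, hx.blockAvg hVconst hlu hrow hrowhat hcol, by simp only [hobj]⟩
  · rintro _ ⟨x, hx, rfl⟩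
    exact ⟨blockAvg κ x, hx.blockAvg hVconst hlu hrowAhat (fun i q => (hrowhat i q).symm)
      hcolAhat, by simp only [hobj]⟩

/-- Objective transfer between two LPs related by a stable partition pair:
`cᵀx = ĉᵀx̂` for feasible `x`; consequently the two WL-indistinguishable LPs
have the same optimal objective value in `EReal` (`⊤` for infeasible,
`⊥` for unbounded). -/
theorem stmt5 {m n s t : ℕ}
    (A Ahat : Fin m → Fin n → ℝ) (b bhat : Fin m → ℝ)
    (c chat l lhat u uhat : Fin n → ℝ) (o ohat : Fin m → Ordering)
    (ρ : Fin m → Fin s) (κ : Fin n → Fin t)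
    (hρ : Function.Surjective ρ) (hκ : Function.Surjective κ)
    (hb : ∀ i, b i = bhat i) (ho : ∀ i, o i = ohat i)
    (hVconst : ∀ i i', ρ i = ρ i' → b i = b i' ∧ o i = o i')
    (hc : ∀ j, c j = chat j) (hl : ∀ j, l j = lhat j) (hu : ∀ j, u j = uhat j)
    (hWconst : ∀ j j', κ j = κ j' → c j = c j' ∧ l j = l j' ∧ u j = u j')
    (hrow : ∀ i i', ρ i = ρ i' → ∀ q,
      ∑ j ∈ Finset.univ.filter (fun j => κ j = q), A i j =
      ∑ j ∈ Finset.univ.filter (fun j => κ j = q), A i' j)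
    (hrowhat : ∀ i q,
      ∑ j ∈ Finset.univ.filter (fun j => κ j = q), A i j =
      ∑ j ∈ Finset.univ.filter (fun j => κ j = q), Ahat i j)
    (hcol : ∀ j j', κ j = κ j' → ∀ p,
      ∑ i ∈ Finset.univ.filter (fun i => ρ i = p), A i j =
      ∑ i ∈ Finset.univ.filter (fun i => ρ i = p), A i j')
    (hcolhat : ∀ j p,
      ∑ i ∈ Finset.univ.filter (fun i => ρ i = p), A i j =
      ∑ i ∈ Finset.univ.filter (fun i => ρ i = p), Ahat i j) :
    (∀ x : Fin n → ℝ, Feas A b l u o x →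
      ∑ j, c j * x j = ∑ j, chat j * blockAvg κ x j) ∧
    sInf ((fun x : Fin n → ℝ => ((∑ j, c j * x j : ℝ) : EReal)) ''
        {x | Feas A b l u o x}) =
      sInf ((fun x : Fin n → ℝ => ((∑ j, chat j * x j : ℝ) : EReal)) ''
        {x | Feas Ahat bhat lhat uhat ohat x}) :=
  stmt5_general A Ahat b bhat c chat l lhat u uhat o ohat ρ κ hb ho hVconst hc hl hu hWconst hrow
    hrowhat hcol hcolhat
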